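/- Let (a_ij) be a matrix with a_ij ≥ 0 for all i, j that defines a compact operator on ℓ². Then the entrywise square matrix (a_ij²) also defines a compact operator on ℓ². -/

import Mathlib

/-!
Since `0 ≤ a i j ≤ ‖A‖`, the matrix `(a i j ^ 2)` is dominated entrywise by the matrix of
`‖A‖ • A`. If a real matrix `b` is dominated entrywise by the matrix of an operator `C` between
sequence spaces, then `|∑ j, b i j * x j| ≤ C |x| i`, so `b` is the matrix of an operator `B` with
`‖B‖ ≤ ‖C‖`. The same domination holds between the row tails `B - truncate s ∘L B` and
`C - truncate s ∘L C`. For compact `C` these tails tend to `0` in norm, since `truncate s → id`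
strongly, hence uniformly on the relatively compact set `C (ball 0 1)`; so `B` is a norm limit of
finite rank operators.
-/

open Filter Topology
open scoped lp ENNReal

theorem isCompactOperator_smulRight {𝕜 E F : Type*} [NontriviallyNormedField 𝕜]
    [LocallyCompactSpace 𝕜] [NormedAddCommGroup E] [NormedSpace 𝕜 E] [NormedAddCommGroup F]
    [NormedSpace 𝕜 F] (f : E →L[𝕜] 𝕜) (v : F) : IsCompactOperator (f.smulRight v) := by
  have : ⇑(f.smulRight v) = ContinuousLinearMap.toSpanSingleton 𝕜 v ∘ f := by
    ext x; simp
  rw [this]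
  exact (isCompactOperator_of_locallyCompactSpace_dom f).clm_comp _

theorem tendsto_norm_comp_of_isCompactOperator {𝕜 E F G α : Type*} [RCLike 𝕜]
    [NormedAddCommGroup E] [NormedSpace 𝕜 E] [NormedAddCommGroup F] [NormedSpace 𝕜 F]
    [NormedAddCommGroup G] [NormedSpace 𝕜 G] {l : Filter α} {K : E →L[𝕜] F}
    (hK : IsCompactOperator K) {Q : α → F →L[𝕜] G} {M : ℝ} (hQM : ∀ a, ‖Q a‖ ≤ M)
    (hQ : ∀ y, Tendsto (fun a => Q a y) l (𝓝 0)) :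
    Tendsto (fun a => ‖Q a ∘L K‖) l (𝓝 0) := by
  obtain ⟨S, hS, hKS⟩ := hK.image_closedBall_subset_compact (f := (K : E →ₗ[𝕜] F)) 1
  rw [Metric.tendsto_nhds]
  intro ε hε
  obtain ⟨δ, hδ, hδε⟩ := exists_pos_mul_lt hε (M + 1)
  obtain ⟨t, ht, hSt⟩ := Metric.totallyBounded_iff.1 hS.totallyBounded δ hδ
  have hnet : ∀ᶠ a in l, ∀ y ∈ t, ‖Q a y‖ < δ :=
    (eventually_all_finite ht).2 fun y _ => (hQ y).norm.eventually_lt_const (by simpa using hδ)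
  filter_upwards [hnet] with a ha
  have hM : 0 ≤ M := (norm_nonneg _).trans (hQM a)
  rw [dist_zero_right, norm_norm]
  refine lt_of_le_of_lt
    (ContinuousLinearMap.opNorm_le_of_unit_norm (by positivity) fun x hx => ?_) hδε
  obtain ⟨y, hy, hxy⟩ := Set.mem_iUnion₂.1 (hSt (hKS ⟨x, by simp [hx], rfl⟩))
  calc ‖Q a (K x)‖ = ‖Q a (K x - y) + Q a y‖ := by rw [← map_add, sub_add_cancel]
    _ ≤ ‖Q a‖ * ‖K x - y‖ + ‖Q a y‖ := norm_add_le_of_le ((Q a).le_opNorm _) le_rfl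
    _ ≤ M * δ + δ := by
      gcongr
      · exact hQM a
      · exact (dist_eq_norm (K x) y ▸ Metric.mem_ball.1 hxy).le
      · exact (ha y hy).le
    _ = (M + 1) * δ := by ring

namespace lp

variable {ι κ : Type*} {p q : ℝ≥0∞}

def abs (x : ℓ^p(ι, ℝ)) : ℓ^p(ι, ℝ) := ⟨fun i => |x i|, (lp.memℓp x).mono' fun i => by simp⟩

@[simp] lemma abs_apply (x : ℓ^p(ι, ℝ)) (i : ι) : abs x i = |x i| := rfl

lemma norm_abs (hp : p ≠ 0) (x : ℓ^p(ι, ℝ)) : ‖abs x‖ = ‖x‖ :=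
  le_antisymm (norm_mono hp fun i => by simp) (norm_mono hp fun i => by simp)

section Matrix

variable [Fact (1 ≤ p)] [Fact (1 ≤ q)]

lemma norm_le_opNorm_mul_of_abs_le_apply_abs (C : ℓ^p(ι, ℝ) →L[ℝ] ℓ^q(κ, ℝ)) (x : ℓ^p(ι, ℝ))
    {y : ℓ^q(κ, ℝ)} (h : ∀ i, |y i| ≤ C (abs x) i) : ‖y‖ ≤ ‖C‖ * ‖x‖ :=
  calc ‖y‖ ≤ ‖C (abs x)‖ :=
        norm_mono (zero_lt_one.trans_le Fact.out).ne' fun i => (h i).trans (le_abs_self _)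
    _ ≤ ‖C‖ * ‖abs x‖ := C.le_opNorm _
    _ = ‖C‖ * ‖x‖ := by rw [norm_abs (zero_lt_one.trans_le Fact.out).ne']

variable [DecidableEq ι]

lemma hasSum_mul_apply_single (hp : p ≠ ⊤) (T : ℓ^p(ι, ℝ) →L[ℝ] ℓ^q(κ, ℝ)) (x : ℓ^p(ι, ℝ))
    (i : κ) : HasSum (fun j => x j * T (lp.single p j 1) i) (T x i) := by
  have := (lp.hasSum_single hp x).mapL ((lp.evalCLM ℝ (fun _ : κ => ℝ) q i).comp T)
  have hsingle (j : ι) : lp.single p j (x j) = x j • (lp.single p j 1 : ℓ^p(ι, ℝ)) := by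
    rw [← lp.single_smul, smul_eq_mul, mul_one]
  simpa [hsingle, evalCLM] using this

lemma hasSum_abs_mul_apply_single (hp : p ≠ ⊤) (C : ℓ^p(ι, ℝ) →L[ℝ] ℓ^q(κ, ℝ))
    (x : ℓ^p(ι, ℝ)) (i : κ) :
    HasSum (fun j => |x j| * C (lp.single p j 1) i) (C (abs x) i) := by
  simpa using hasSum_mul_apply_single hp C (abs x) i

lemma abs_apply_single_le_norm (T : ℓ^p(ι, ℝ) →L[ℝ] ℓ^q(κ, ℝ)) (i : κ) (j : ι) :
    |T (lp.single p j 1) i| ≤ ‖T‖ := by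
  have hq : q ≠ 0 := (zero_lt_one.trans_le Fact.out).ne'
  calc |T (lp.single p j 1) i| ≤ ‖T (lp.single p j 1)‖ := by
        simpa only [Real.norm_eq_abs] using norm_apply_le_norm hq (T (lp.single p j 1)) i
    _ ≤ ‖T‖ * ‖(lp.single p j 1 : ℓ^p(ι, ℝ))‖ := T.le_opNorm _
    _ = ‖T‖ := by rw [lp.norm_single (zero_lt_one.trans_le Fact.out), norm_one, mul_one]

lemma norm_le_of_abs_apply_single_le (hp : p ≠ ⊤) {B C : ℓ^p(ι, ℝ) →L[ℝ] ℓ^q(κ, ℝ)}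
    (hBC : ∀ i j, |B (lp.single p j 1) i| ≤ C (lp.single p j 1) i) : ‖B‖ ≤ ‖C‖ :=
  B.opNorm_le_bound (norm_nonneg C) fun x => norm_le_opNorm_mul_of_abs_le_apply_abs C x fun i =>
    (hasSum_mul_apply_single hp B x i).norm_le_of_bounded (hasSum_abs_mul_apply_single hp C x i)
      fun j => by rw [Real.norm_eq_abs, abs_mul]; gcongr; exact hBC i j

lemma exists_clm_apply_single_eq (hp : p ≠ ⊤) (C : ℓ^p(ι, ℝ) →L[ℝ] ℓ^q(κ, ℝ))
    {b : κ → ι → ℝ} (hb : ∀ i j, |b i j| ≤ C (lp.single p j 1) i) :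
    ∃ B : ℓ^p(ι, ℝ) →L[ℝ] ℓ^q(κ, ℝ), ∀ i j, B (lp.single p j 1) i = b i j := by
  have hdom (x : ℓ^p(ι, ℝ)) (i : κ) (j : ι) : ‖x j * b i j‖ ≤ |x j| * C (lp.single p j 1) i := by
    rw [Real.norm_eq_abs, abs_mul]; gcongr; exact hb i j
  have hsum (x : ℓ^p(ι, ℝ)) (i : κ) : Summable fun j => x j * b i j :=
    .of_norm_bounded (hasSum_abs_mul_apply_single hp C x i).summable (hdom x i)
  have hbound (x : ℓ^p(ι, ℝ)) (i : κ) : |∑' j, x j * b i j| ≤ C (abs x) i :=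
    (hsum x i).hasSum.norm_le_of_bounded (hasSum_abs_mul_apply_single hp C x i) (hdom x i)
  let L : ℓ^p(ι, ℝ) →ₗ[ℝ] ℓ^q(κ, ℝ) :=
    { toFun x := ⟨fun i => ∑' j, x j * b i j, (lp.memℓp (C (abs x))).mono (hbound x)⟩
      map_add' x y := lp.ext <| funext fun i => by
        simp only [lp.coeFn_add, Pi.add_apply, add_mul]
        exact (hsum x i).tsum_add (hsum y i)
      map_smul' c x := lp.ext <| funext fun i => by
        simp [mul_assoc, tsum_mul_left] }
  refine ⟨L.mkContinuous ‖C‖ fun x => norm_le_opNorm_mul_of_abs_le_apply_abs C x (hbound x),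
    fun i j => ?_⟩
  simp [L, lp.single_apply, Pi.single_apply]

end Matrix

section Truncation

variable [DecidableEq κ] [Fact (1 ≤ q)]

noncomputable def truncate (s : Finset κ) : ℓ^q(κ, ℝ) →L[ℝ] ℓ^q(κ, ℝ) :=
  ∑ i ∈ s, (lp.evalCLM ℝ (fun _ : κ => ℝ) q i).smulRight (lp.single q i 1)

lemma truncate_eq_sum_single (s : Finset κ) (y : ℓ^q(κ, ℝ)) :
    truncate s y = ∑ i ∈ s, lp.single q i (y i) := by
  simp [truncate, evalCLM, ← lp.single_smul]

lemma truncate_apply (s : Finset κ) (y : ℓ^q(κ, ℝ)) (k : κ) :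
    truncate s y k = if k ∈ s then y k else 0 := by
  rw [truncate_eq_sum_single, lp.coeFn_sum, Finset.sum_apply]
  simp [lp.single_apply, Pi.single_apply]

lemma isCompactOperator_truncate (s : Finset κ) : IsCompactOperator (truncate (q := q) s) :=
  (compactOperator _ _ _).sum_mem fun _ _ => isCompactOperator_smulRight _ _

lemma norm_id_sub_truncate_le (s : Finset κ) :
    ‖ContinuousLinearMap.id ℝ ℓ^q(κ, ℝ) - truncate s‖ ≤ 1 := by
  refine ContinuousLinearMap.opNorm_le_bound _ zero_le_one fun y => ?_
  rw [one_mul]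
  refine norm_mono (zero_lt_one.trans_le Fact.out).ne' fun k => ?_
  simp only [sub_apply, ContinuousLinearMap.id_apply, lp.coeFn_sub, Pi.sub_apply,
    truncate_apply]
  split_ifs <;> simp

lemma tendsto_truncate (hq : q ≠ ⊤) (y : ℓ^q(κ, ℝ)) :
    Tendsto (fun s => truncate s y) atTop (𝓝 y) := by
  simp_rw [truncate_eq_sum_single]
  exact lp.hasSum_single hq y

lemma tendsto_truncate_comp {E : Type*} [NormedAddCommGroup E] [NormedSpace ℝ E] (hq : q ≠ ⊤)
    {T : E →L[ℝ] ℓ^q(κ, ℝ)} (hT : IsCompactOperator T) :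
    Tendsto (fun s => truncate s ∘L T) atTop (𝓝 T) := by
  have hQ (y : ℓ^q(κ, ℝ)) :
      Tendsto (fun s => (ContinuousLinearMap.id ℝ ℓ^q(κ, ℝ) - truncate s :
        ℓ^q(κ, ℝ) →L[ℝ] ℓ^q(κ, ℝ)) y) atTop (𝓝 0) := by
    simpa using (tendsto_truncate hq y).const_sub y
  rw [tendsto_iff_norm_sub_tendsto_zero]
  simpa [ContinuousLinearMap.sub_comp, norm_sub_rev] using
    tendsto_norm_comp_of_isCompactOperator hT norm_id_sub_truncate_le hQ

end Truncation

theorem isCompactOperator_of_abs_apply_single_le [DecidableEq ι] [DecidableEq κ]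
    [Fact (1 ≤ p)] [Fact (1 ≤ q)] (hp : p ≠ ⊤) (hq : q ≠ ⊤) {B C : ℓ^p(ι, ℝ) →L[ℝ] ℓ^q(κ, ℝ)}
    (hC : IsCompactOperator C) (hBC : ∀ i j, |B (lp.single p j 1) i| ≤ C (lp.single p j 1) i) :
    IsCompactOperator B := by
  have htail (s : Finset κ) : ‖truncate s ∘L B - B‖ ≤ ‖truncate s ∘L C - C‖ := by
    rw [norm_sub_rev, norm_sub_rev (truncate s ∘L C)]
    refine norm_le_of_abs_apply_single_le hp fun i j => ?_
    simp only [sub_apply, ContinuousLinearMap.comp_apply, lp.coeFn_sub, Pi.sub_apply,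
      truncate_apply]
    split_ifs <;> simp [hBC i j]
  have hlimC := tendsto_iff_norm_sub_tendsto_zero.1 (tendsto_truncate_comp hq hC)
  have hlimB : Tendsto (fun s => truncate s ∘L B) atTop (𝓝 B) :=
    tendsto_iff_norm_sub_tendsto_zero.2 (squeeze_zero (fun _ => norm_nonneg _) htail hlimC)
  exact isCompactOperator_of_tendsto hlimB
    (.of_forall fun s => (isCompactOperator_truncate s).comp_clm B)

end lp

/-- if a matrix `(a_ij)` with nonnegative entries defines a compact
operator on `ℓ²`, then the entrywise square matrix `(a_ij²)` also defines a
compact operator on `ℓ²`. -/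
theorem stmt12 (a : ℕ → ℕ → ℝ) (h0 : ∀ i j, 0 ≤ a i j)
    (A : lp (fun _ : ℕ => ℝ) 2 →L[ℝ] lp (fun _ : ℕ => ℝ) 2)
    (hA : ∀ i j : ℕ, A (lp.single 2 j (1 : ℝ)) i = a i j)
    (hc : IsCompactOperator A) :
    ∃ A2 : lp (fun _ : ℕ => ℝ) 2 →L[ℝ] lp (fun _ : ℕ => ℝ) 2,
      (∀ i j : ℕ, A2 (lp.single 2 j (1 : ℝ)) i = a i j ^ 2) ∧
      IsCompactOperator A2 := by
  have hdom (i j : ℕ) : |a i j ^ 2| ≤ (‖A‖ • A) (lp.single 2 j 1) i := by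
    have hle : a i j ≤ ‖A‖ := by
      simpa [hA, abs_of_nonneg (h0 i j)] using lp.abs_apply_single_le_norm A i j
    rw [smul_apply, lp.coeFn_smul, Pi.smul_apply, smul_eq_mul, hA, abs_of_nonneg (by positivity),
      sq]
    exact mul_le_mul_of_nonneg_right hle (h0 i j)
  obtain ⟨A2, hA2⟩ := lp.exists_clm_apply_single_eq ENNReal.ofNat_ne_top (‖A‖ • A) hdom
  refine ⟨A2, hA2, lp.isCompactOperator_of_abs_apply_single_le ENNReal.ofNat_ne_top
    ENNReal.ofNat_ne_top (C := ‖A‖ • A) (hc.smul ‖A‖) fun i j => ?_⟩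
  rw [hA2]
  exact hdom i j
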